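/- arXiv:2506.12271 — 2 statements merged into one kernel-verified Lean document; each statement's English description precedes it below -/
import Mathlib

section
/- Let G be an oriented hypergraph and let N be a head-equivalence class of contributors of G that contains a contributor which is not edge-monic. Then the sum of csgn(c) over all c ∈ N equals 0. -/
open scoped Classical

noncomputable section

/-- An oriented hypergraph `G = (V, E, I, ς, ω, σ)`: `vtx = ς` assigns each incidence
its vertex, `edg = ω` assigns each incidence its edge, and `sgn = σ` is its sign. -/
structure OHG (V E I : Type*) where
  vtx : I → V
  edg : I → E
  sgn : I → ℤˣ

variable {V E I : Type*} [Fintype V] [DecidableEq V] [Fintype E] [DecidableEq E]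
  [Fintype I] [DecidableEq I]

/-- A contributor `c = (t, h)`: each tail sits at its vertex, tail and head of each
`P₁`-map share an edge, and the head map `v ↦ ς (h v)` is a bijection of `V`. -/
def IsContributor (G : OHG V E I) (c : (V → I) × (V → I)) : Prop :=
  (∀ v, G.vtx (c.1 v) = v) ∧ (∀ v, G.edg (c.1 v) = G.edg (c.2 v)) ∧
    Function.Bijective fun v => G.vtx (c.2 v)

/-- The orbit of `v` under iteration of `f` (for `f` a bijection of a finite type this
is the full cycle of `v`). -/
def orbitOf (f : V → V) (v : V) : Finset V :=
  Finset.univ.filter fun w => ∃ n : ℕ, f^[n] v = w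

/-- The set of orbits of `f`. -/
def orbitsOf (f : V → V) : Finset (Finset V) :=
  Finset.univ.image (orbitOf f)

/-- `bs c`: the number of backsteps of a contributor. -/
def bsC (c : (V → I) × (V → I)) : ℕ :=
  (Finset.univ.filter fun v => c.1 v = c.2 v).card

/-- `ec c`: the number of orbits (components) of even cardinality. -/
def ecC (G : OHG V E I) (c : (V → I) × (V → I)) : ℕ :=
  ((orbitsOf fun v => G.vtx (c.2 v)).filter fun O => Even O.card).card

/-- A negative orbit: not a single backstep, and the product of the adjacency signs
`-σ(t_v)·σ(h_v)` over the orbit is `-1`. -/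
def NegOrbit (G : OHG V E I) (c : (V → I) × (V → I)) (O : Finset V) : Prop :=
  (¬ ∃ v, O = {v} ∧ c.1 v = c.2 v) ∧
    ∏ v ∈ O, (-(G.sgn (c.1 v) * G.sgn (c.2 v))) = (-1 : ℤˣ)

/-- `nc c`: the number of negative orbits (components). -/
def ncC (G : OHG V E I) (c : (V → I) × (V → I)) : ℕ :=
  ((orbitsOf fun v => G.vtx (c.2 v)).filter (NegOrbit G c)).card

/-- The contributor sign `csgn c = (-1) ^ (ec c + nc c + bs c)`. -/
def csgnC (G : OHG V E I) (c : (V → I) × (V → I)) : ℤ :=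
  (-1) ^ (ecC G c + ncC G c + bsC c)

/-- A contributor is edge-monic when its tail edges are pairwise distinct. -/
def EdgeMonic (G : OHG V E I) (c : (V → I) × (V → I)) : Prop :=
  Function.Injective fun v => G.edg (c.1 v)

/-- Tail-equivalence: identical tail maps. -/
def TailEquiv (c c' : (V → I) × (V → I)) : Prop := c.1 = c'.1

/-- Head-equivalence: identical sets of head incidences. -/
def HeadEquiv (c c' : (V → I) × (V → I)) : Prop := Set.range c.2 = Set.range c'.2

/-!
For a contributor `c` with head permutation `π_c`, the even orbits of `π_c` are exactly the
supports of its even-length cycles, so `(-1) ^ ec(c) = sgn π_c`. Each orbit contributes the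
product of its adjacency signs `-σ(t_v)σ(h_v)`, which is `-1` exactly when the orbit is a single
backstep or negative; hence `csgn c = sgn π_c · ∏_v -σ(t_v)σ(h_v)`.

If `c₀` is not edge-monic, two of its heads `i ≠ j` lie in a common edge. Exchanging `i` and `j`
in the heads of every contributor head-equivalent to `c₀` is a fixed-point-free involution of the
class. It composes `π_c` with a transposition and only permutes the heads, so it reverses
`csgn`, and the signs cancel in pairs.
-/

section Orbits

variable {V : Type*} [Fintype V]

@[simp]
lemma mem_orbitOf {f : V → V} {v w : V} : w ∈ orbitOf f v ↔ ∃ n : ℕ, f^[n] v = w := by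
  simp [orbitOf]

lemma self_mem_orbitOf (f : V → V) (v : V) : v ∈ orbitOf f v :=
  mem_orbitOf.mpr ⟨0, rfl⟩

lemma orbitOf_mem_orbitsOf [DecidableEq V] (f : V → V) (v : V) : orbitOf f v ∈ orbitsOf f :=
  Finset.mem_image_of_mem _ (Finset.mem_univ v)

lemma mem_orbitsOf [DecidableEq V] {f : V → V} {O : Finset V} :
    O ∈ orbitsOf f ↔ ∃ v, orbitOf f v = O := by
  simp [orbitsOf]

lemma orbitOf_eq_singleton {f : V → V} {v : V} (h : f.IsFixedPt v) : orbitOf f v = {v} := by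
  ext w
  simp only [mem_orbitOf, Finset.mem_singleton]
  exact ⟨fun ⟨n, hn⟩ => hn ▸ (h.iterate n).eq, fun hw => ⟨0, hw.symm⟩⟩

lemma mem_orbitOf_iff_sameCycle {π : Equiv.Perm V} {v w : V} :
    w ∈ orbitOf π v ↔ π.SameCycle v w := by
  rw [mem_orbitOf]
  refine ⟨fun ⟨n, hn⟩ => ⟨n, by rw [zpow_natCast, ← hn, Equiv.Perm.iterate_eq_pow]⟩,
    fun h => ?_⟩
  obtain ⟨n, hn⟩ := h.exists_nat_pow_eq
  exact ⟨n, by rw [Equiv.Perm.iterate_eq_pow, hn]⟩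

lemma orbitOf_eq_of_mem {π : Equiv.Perm V} {v w : V} (h : w ∈ orbitOf π v) :
    orbitOf π w = orbitOf π v := by
  have hvw := mem_orbitOf_iff_sameCycle.mp h
  ext x
  rw [mem_orbitOf_iff_sameCycle, mem_orbitOf_iff_sameCycle]
  exact ⟨hvw.trans, hvw.symm.trans⟩

lemma prod_orbitsOf_prod [DecidableEq V] {M : Type*} [CommMonoid M] (π : Equiv.Perm V)
    (g : V → M) :
    ∏ O ∈ orbitsOf π, ∏ v ∈ O, g v = ∏ v, g v := by
  have hdisj : (orbitsOf π : Set (Finset V)).PairwiseDisjoint id := by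
    intro O₁ h₁ O₂ h₂ hne
    obtain ⟨v₁, rfl⟩ := mem_orbitsOf.mp h₁
    obtain ⟨v₂, rfl⟩ := mem_orbitsOf.mp h₂
    refine Finset.disjoint_left.mpr fun x hx₁ hx₂ => hne ?_
    rw [← orbitOf_eq_of_mem hx₁, ← orbitOf_eq_of_mem hx₂]
  have hcover : (orbitsOf π).biUnion id = Finset.univ :=
    Finset.eq_univ_of_forall fun v =>
      Finset.mem_biUnion.mpr ⟨_, orbitOf_mem_orbitsOf _ v, self_mem_orbitOf _ v⟩
  rw [← hcover, Finset.prod_biUnion hdisj]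
  rfl

lemma support_cycleOf_eq_orbitOf [DecidableEq V] {π : Equiv.Perm V} {x : V}
    (hx : x ∈ π.support) :
    (π.cycleOf x).support = orbitOf π x := by
  ext y
  rw [Equiv.Perm.mem_support_cycleOf_iff, mem_orbitOf_iff_sameCycle]
  exact and_iff_left hx

lemma support_mem_orbitsOf [DecidableEq V] {π g : Equiv.Perm V}
    (hg : g ∈ π.cycleFactorsFinset) :
    g.support ∈ orbitsOf π := by
  obtain ⟨x, hx⟩ := (Equiv.Perm.mem_cycleFactorsFinset_iff.mp hg).1.nonempty_support
  rw [Equiv.Perm.cycle_is_cycleOf hx hg,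
    support_cycleOf_eq_orbitOf (Equiv.Perm.mem_cycleFactorsFinset_support_le hg hx)]
  exact orbitOf_mem_orbitsOf _ x

lemma exists_cycleFactor_support_eq [DecidableEq V] {π : Equiv.Perm V} {O : Finset V}
    (hO : O ∈ orbitsOf π) (h : O.card ≠ 1) :
    ∃ g ∈ π.cycleFactorsFinset, g.support = O := by
  obtain ⟨x, rfl⟩ := mem_orbitsOf.mp hO
  have hx : x ∈ π.support := Equiv.Perm.mem_support.mpr fun hfix =>
    h (by rw [orbitOf_eq_singleton hfix, Finset.card_singleton])
  exact ⟨π.cycleOf x, Equiv.Perm.cycleOf_mem_cycleFactorsFinset_iff.mpr hx,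
    support_cycleOf_eq_orbitOf hx⟩

lemma eq_of_support_eq_of_mem_cycleFactorsFinset [DecidableEq V] {π g₁ g₂ : Equiv.Perm V}
    (h₁ : g₁ ∈ π.cycleFactorsFinset) (h₂ : g₂ ∈ π.cycleFactorsFinset)
    (h : g₁.support = g₂.support) : g₁ = g₂ := by
  obtain ⟨x, hx⟩ := (Equiv.Perm.mem_cycleFactorsFinset_iff.mp h₁).1.nonempty_support
  rw [Equiv.Perm.cycle_is_cycleOf hx h₁, Equiv.Perm.cycle_is_cycleOf (h ▸ hx) h₂]

lemma card_even_orbitsOf [DecidableEq V] (π : Equiv.Perm V) :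
    ((orbitsOf π).filter fun O => Even O.card).card =
      (π.cycleFactorsFinset.filter fun g => Even g.support.card).card := by
  symm
  refine Finset.card_bij (fun g _ => g.support) (fun g hg => ?_)
    (fun g₁ h₁ g₂ h₂ => eq_of_support_eq_of_mem_cycleFactorsFinset
      (Finset.mem_filter.mp h₁).1 (Finset.mem_filter.mp h₂).1) (fun O hO => ?_)
  · rw [Finset.mem_filter] at hg ⊢
    exact ⟨support_mem_orbitsOf hg.1, hg.2⟩
  · rw [Finset.mem_filter] at hO
    obtain ⟨g, hg, rfl⟩ :=
      exists_cycleFactor_support_eq hO.1 fun h1 => Nat.not_even_one (h1 ▸ hO.2)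
    exact ⟨g, Finset.mem_filter.mpr ⟨hg, hO.2⟩, rfl⟩

lemma sign_eq_neg_one_pow_card_even_orbitsOf [DecidableEq V] (π : Equiv.Perm V) :
    Equiv.Perm.sign π = (-1) ^ ((orbitsOf π).filter fun O => Even O.card).card := by
  have hcycle (n : ℕ) : -(-1 : ℤˣ) ^ n = if Even n then -1 else 1 := by
    rcases Nat.even_or_odd n with h | h
    · rw [if_pos h, h.neg_one_pow]
    · rw [if_neg (Nat.not_even_iff_odd.mpr h), h.neg_one_pow, neg_neg]
  rw [card_even_orbitsOf, Equiv.Perm.sign_of_cycleType', Equiv.Perm.cycleType_def,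
    Multiset.map_map, ← Finset.prod_eq_multiset_prod]
  simp only [Function.comp_apply, hcycle]
  rw [Finset.prod_ite, Finset.prod_const_one, mul_one, Finset.prod_const]

end Orbits

section ContributorSign

variable {V E I : Type*} {G : OHG V E I} {c : (V → I) × (V → I)}

def IsContributor.headPerm (hc : IsContributor G c) : Equiv.Perm V :=
  Equiv.ofBijective _ hc.2.2

@[simp]
lemma IsContributor.headPerm_apply (hc : IsContributor G c) (v : V) :
    hc.headPerm v = G.vtx (c.2 v) :=
  rfl

lemma IsContributor.isFixedPt_of_backstep (hc : IsContributor G c) {v : V}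
    (hv : c.1 v = c.2 v) : Function.IsFixedPt hc.headPerm v := by
  rw [Function.IsFixedPt, hc.headPerm_apply, ← hv, hc.1 v]

def IsBackstepOrbit (c : (V → I) × (V → I)) (O : Finset V) : Prop :=
  ∃ v, O = {v} ∧ c.1 v = c.2 v

lemma IsContributor.bsC_eq_card_backstep_orbitsOf [Fintype V] [DecidableEq V] [DecidableEq I]
    (hc : IsContributor G c) :
    bsC c = ((orbitsOf hc.headPerm).filter (IsBackstepOrbit c)).card := by
  refine Finset.card_bij (fun v _ => {v}) (fun v hv => ?_)
    (fun _ _ _ _ h => Finset.singleton_injective h) (fun O hO => ?_)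
  · have hv := (Finset.mem_filter.mp hv).2
    refine Finset.mem_filter.mpr ⟨?_, v, rfl, hv⟩
    rw [← orbitOf_eq_singleton (hc.isFixedPt_of_backstep hv)]
    exact orbitOf_mem_orbitsOf _ v
  · obtain ⟨_, v, rfl, hv⟩ := Finset.mem_filter.mp hO
    exact ⟨v, Finset.mem_filter.mpr ⟨Finset.mem_univ v, hv⟩, rfl⟩

lemma prod_orbit_adjSign [DecidableEq I] (O : Finset V) :
    ∏ v ∈ O, -(G.sgn (c.1 v) * G.sgn (c.2 v)) =
      (if IsBackstepOrbit c O then -1 else 1) * (if NegOrbit G c O then -1 else 1) := by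
  by_cases hB : IsBackstepOrbit c O
  · obtain ⟨v, rfl, hv⟩ := hB
    have hN : ¬ NegOrbit G c {v} := fun hN => hN.1 ⟨v, rfl, hv⟩
    rw [if_pos ⟨v, rfl, hv⟩, if_neg hN, Finset.prod_singleton, hv, Int.units_mul_self, mul_one]
  · rw [if_neg hB, one_mul]
    by_cases hN : NegOrbit G c O
    · rw [if_pos hN]
      exact hN.2
    · rw [if_neg hN]
      exact (Int.units_eq_one_or _).resolve_right fun h => hN ⟨hB, h⟩

lemma IsContributor.prod_adjSign [Fintype V] [DecidableEq V] [DecidableEq I]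
    (hc : IsContributor G c) :
    ∏ v, -(G.sgn (c.1 v) * G.sgn (c.2 v)) = (-1) ^ (ncC G c + bsC c) := by
  rw [← prod_orbitsOf_prod hc.headPerm, Finset.prod_congr rfl fun O _ => prod_orbit_adjSign O,
    Finset.prod_mul_distrib, ← Finset.prod_filter, ← Finset.prod_filter, Finset.prod_const,
    Finset.prod_const, hc.bsC_eq_card_backstep_orbitsOf, pow_add, mul_comm]
  rfl

lemma IsContributor.csgnC_eq [Fintype V] [DecidableEq V] [DecidableEq I]
    (hc : IsContributor G c) :
    csgnC G c =
      ((Equiv.Perm.sign hc.headPerm * ∏ v, -(G.sgn (c.1 v) * G.sgn (c.2 v)) : ℤˣ) : ℤ) := by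
  rw [hc.prod_adjSign, sign_eq_neg_one_pow_card_even_orbitsOf, ← pow_add, ← add_assoc, csgnC]
  push_cast
  rfl

end ContributorSign

section HeadSwap

variable {V E I : Type*} {G : OHG V E I} {c : (V → I) × (V → I)}

lemma IsContributor.comp_swap [DecidableEq V] (hc : IsContributor G c) {a b : V}
    (hab : G.edg (c.2 a) = G.edg (c.2 b)) : IsContributor G (c.1, c.2 ∘ Equiv.swap a b) :=
  ⟨hc.1, fun v => (hc.2.1 v).trans (Equiv.apply_swap_eq_self (v := G.edg ∘ c.2) hab v).symm,
    hc.2.2.comp (Equiv.swap a b).bijective⟩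

lemma headEquiv_comp_swap [DecidableEq V] (a b : V) :
    HeadEquiv (c.1, c.2 ∘ Equiv.swap a b) c :=
  EquivLike.range_comp c.2 (Equiv.swap a b)

lemma IsContributor.csgnC_comp_swap [Fintype V] [DecidableEq V] [DecidableEq I]
    (hc : IsContributor G c) {a b : V} (hne : a ≠ b) (hab : G.edg (c.2 a) = G.edg (c.2 b)) :
    csgnC G (c.1, c.2 ∘ Equiv.swap a b) = -csgnC G c := by
  have hc' := hc.comp_swap hab
  have hsign : Equiv.Perm.sign hc'.headPerm = -Equiv.Perm.sign hc.headPerm := by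
    rw [show hc'.headPerm = hc.headPerm * Equiv.swap a b from Equiv.ext fun _ => rfl, map_mul,
      Equiv.Perm.sign_swap hne, mul_neg_one]
  have hprod : ∏ v, -(G.sgn (c.1 v) * G.sgn (c.2 (Equiv.swap a b v))) =
      ∏ v, -(G.sgn (c.1 v) * G.sgn (c.2 v)) := by
    simp only [neg_mul_eq_neg_mul, Finset.prod_mul_distrib,
      Equiv.prod_comp (Equiv.swap a b) (fun v => G.sgn (c.2 v))]
  rw [hc'.csgnC_eq, hc.csgnC_eq, hsign]
  simp only [Function.comp_apply, hprod, neg_mul, Units.val_neg]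

end HeadSwap

lemma sum_csgn_headEquiv_class_eq_zero_of_edg_eq {V E I : Type*} [Fintype V] [DecidableEq V]
    [Fintype I] [DecidableEq I] {G : OHG V E I} {c₀ : (V → I) × (V → I)} {i j : I}
    (hij : i ≠ j) (hedg : G.edg i = G.edg j) (hi : i ∈ Set.range c₀.2)
    (hj : j ∈ Set.range c₀.2) :
    ∑ c ∈ Finset.univ.filter (fun c => IsContributor G c ∧ HeadEquiv c c₀),
      csgnC G c = 0 := by
  have hswap : ∀ c, IsContributor G c → HeadEquiv c c₀ → ∃ a b, a ≠ b ∧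
      G.edg (c.2 a) = G.edg (c.2 b) ∧
        (c.1, Equiv.swap i j ∘ c.2) = (c.1, c.2 ∘ Equiv.swap a b) := by
    intro c hc hhe
    obtain ⟨a, rfl⟩ : i ∈ Set.range c.2 := hhe ▸ hi
    obtain ⟨b, rfl⟩ : j ∈ Set.range c.2 := hhe ▸ hj
    have hinj : Function.Injective c.2 := hc.2.2.injective.of_comp
    exact ⟨a, b, fun h => hij (congrArg c.2 h), hedg,
      congrArg _ (funext fun v => (hinj.map_swap a b v).symm)⟩
  refine Finset.sum_involution (fun c _ => (c.1, Equiv.swap i j ∘ c.2))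
    (fun c hc => ?_) (fun c hc _ h => ?_) (fun c hc => ?_)
    (fun c _ => Prod.ext rfl (funext fun v => Equiv.swap_apply_self i j (c.2 v)))
  all_goals obtain ⟨-, hc, hhe⟩ := Finset.mem_filter.mp hc
  · obtain ⟨a, b, hne, hab, heq⟩ := hswap c hc hhe
    rw [heq, hc.csgnC_comp_swap hne hab, add_neg_cancel]
  · obtain ⟨a, ha⟩ : i ∈ Set.range c.2 := hhe ▸ hi
    have := congrFun (congrArg Prod.snd h) a
    simp only [Function.comp_apply, ha, Equiv.swap_apply_left] at this
    exact hij this.symm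
  · obtain ⟨a, b, hne, hab, heq⟩ := hswap c hc hhe
    rw [heq]
    exact Finset.mem_filter.mpr ⟨Finset.mem_univ _, hc.comp_swap hab,
      (headEquiv_comp_swap a b).trans hhe⟩

/-- If a head-equivalence class of contributors of an oriented
hypergraph `G` contains a contributor that is not edge-monic, then the sum of `csgn`
over the class is `0`. -/
theorem sum_csgn_headEquiv_class_of_not_edgeMonic (G : OHG V E I)
    (c₀ : (V → I) × (V → I)) (h₀ : IsContributor G c₀) (hne : ¬ EdgeMonic G c₀) :
    ∑ c ∈ Finset.univ.filter (fun c => IsContributor G c ∧ HeadEquiv c c₀),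
      csgnC G c = 0 := by
  obtain ⟨a, b, hab, hne'⟩ := Function.not_injective_iff.mp hne
  refine sum_csgn_headEquiv_class_eq_zero_of_edg_eq (i := c₀.2 a) (j := c₀.2 b)
    (fun h => hne' (h₀.2.2.injective (congrArg G.vtx h))) ?_ ⟨a, rfl⟩ ⟨b, rfl⟩
  rw [← h₀.2.1 a, ← h₀.2.1 b]
  exact hab
end
end

section
/- Let G be an oriented hypergraph and let φ be an injection from U ⊆ V onto W ⊆ V. Then the signed sum of csgn(c) over all nonzero reduced [u,w]-contributors c of G equals the signed sum of csgn(c) over only the edge-monic nonzero reduced [u,w]-contributors of G; equivalently, the sum of csgn(c) over the non-edge-monic nonzero reduced [u,w]-contributors is 0. -/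
open Matrix
open scoped Classical

noncomputable section

variable {V E I : Type*} [Fintype V] [DecidableEq V] [Fintype E] [DecidableEq E]
  [Fintype I] [DecidableEq I]

/-- A (nonzero) reduced `[u,w]`-contributor for the injection `φ : U → V` with image
`W`: a map `c : V∖U → I × I` whose tails sit at their vertices, whose tail and head
share an edge, and whose head map is a bijection from `V∖U` onto `V∖W`. -/
def IsRedCont (G : OHG V E I) (U : Finset V) (φ : {v : V // v ∈ U} ↪ V)
    (c : {v : V // v ∉ U} → I × I) : Prop :=
  (∀ v, G.vtx (c v).1 = v.1) ∧ (∀ v, G.edg (c v).1 = G.edg (c v).2) ∧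
    Set.BijOn (fun v : {v : V // v ∉ U} => G.vtx (c v).2) Set.univ
      {w : V | w ∉ Set.range φ}

/-- The completion `č` of a reduced contributor: the self-map of `V` agreeing with the
head map of `c` on `V∖U` and with `φ` on `U`. -/
def compFun (G : OHG V E I) (U : Finset V) (φ : {v : V // v ∈ U} ↪ V)
    (c : {v : V // v ∉ U} → I × I) : V → V :=
  fun v => if h : v ∈ U then φ ⟨v, h⟩ else G.vtx (c ⟨v, h⟩).2

/-- `ec č`: the number of even cycles of the completion of a reduced contributor. -/
def ecR (G : OHG V E I) (U : Finset V) (φ : {v : V // v ∈ U} ↪ V)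
    (c : {v : V // v ∉ U} → I × I) : ℕ :=
  ((orbitsOf (compFun G U φ c)).filter fun O => Even O.card).card

/-- `bs c`: the number of backsteps of a reduced contributor. -/
def bsR (U : Finset V) (c : {v : V // v ∉ U} → I × I) : ℕ :=
  (Finset.univ.filter fun v : {v : V // v ∉ U} => (c v).1 = (c v).2).card

/-- The arc relation of the digraph on `V` with an arc `v → ς (h_v)` for each
`v ∈ V∖U`. -/
def arcRel (G : OHG V E I) (U : Finset V) (c : {v : V // v ∉ U} → I × I) :
    V → V → Prop :=
  fun a b => ∃ v : {v : V // v ∉ U}, v.1 = a ∧ G.vtx (c v).2 = b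

/-- The connected component of `v` in the digraph of a reduced contributor. -/
def compOf (G : OHG V E I) (U : Finset V) (c : {v : V // v ∉ U} → I × I) (v : V) :
    Finset V :=
  Finset.univ.filter fun w => Relation.EqvGen (arcRel G U c) v w

/-- The components of a reduced contributor. -/
def compsOf (G : OHG V E I) (U : Finset V) (c : {v : V // v ∉ U} → I × I) :
    Finset (Finset V) :=
  Finset.univ.image (compOf G U c)

/-- A negative component: not a single backstep, and the product of the adjacency
signs `-σ(t_v)·σ(h_v)` over the arcs it contains is `-1`. -/
def NegComp (G : OHG V E I) (U : Finset V) (c : {v : V // v ∉ U} → I × I)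
    (O : Finset V) : Prop :=
  (¬ ∃ v : {v : V // v ∉ U}, O = {v.1} ∧ (c v).1 = (c v).2) ∧
    ∏ v ∈ Finset.univ.filter (fun v : {v : V // v ∉ U} => v.1 ∈ O),
      (-(G.sgn (c v).1 * G.sgn (c v).2)) = (-1 : ℤˣ)

/-- `nc c`: the number of negative components of a reduced contributor. -/
def ncR (G : OHG V E I) (U : Finset V) (c : {v : V // v ∉ U} → I × I) : ℕ :=
  ((compsOf G U c).filter (NegComp G U c)).card

/-- The sign `csgn c = (-1) ^ (ec č + nc c + bs c)` of a reduced contributor. -/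
def csgnR (G : OHG V E I) (U : Finset V) (φ : {v : V // v ∈ U} ↪ V)
    (c : {v : V // v ∉ U} → I × I) : ℤ :=
  (-1) ^ (ecR G U φ c + ncR G U c + bsR U c)

/-- A reduced contributor is edge-monic when its tail edges are pairwise distinct. -/
def EdgeMonicR (G : OHG V E I) (U : Finset V) (c : {v : V // v ∉ U} → I × I) : Prop :=
  Function.Injective fun v : {v : V // v ∉ U} => G.edg (c v).1

/-- The incidence matrix of an oriented hypergraph. -/
def incM (G : OHG V E I) : Matrix V E ℤ :=
  Matrix.of fun v e =>
    ∑ i ∈ Finset.univ.filter (fun i => G.vtx i = v ∧ G.edg i = e), (G.sgn i : ℤ)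

/-- The Laplacian `L = H Hᵀ` of an oriented hypergraph. -/
def lapM (G : OHG V E I) : Matrix V V ℤ :=
  incM G * (incM G)ᵀ

/-!
Swapping the heads of two distinct vertices `p ≠ q` of `V∖U` whose tails lie in the same edge
turns a reduced contributor `c` into another one, different from `c` and again not edge-monic;
with `p, q` chosen from the tail edges alone this is a fixed-point-free involution. It is
sign-reversing because `csgn c = sgn(č) · ∏ᵥ -σ(t_v)σ(h_v)`: the sign of a permutation is `-1`
to the number of its even cycles, and grouping the product by components gives
`(-1)^(nc c + bs c)`, a backstep being a component of its own with sign product `-1`. The swap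
composes `č` with the transposition `(p q)` and only permutes the head signs in the product.
-/

open Finset Equiv

section Orbits

variable {α : Type*} [Fintype α] [DecidableEq α] {e : Perm α} {v : α}

theorem orbitOf_eq_singleton_s9 (hv : e v = v) : orbitOf e v = {v} := by
  ext w
  simp [orbitOf, Function.iterate_fixed hv, eq_comm]

theorem orbitOf_eq_support_cycleOf (hv : v ∈ e.support) :
    orbitOf e v = (e.cycleOf v).support := by
  ext w
  simp only [orbitOf, mem_filter, mem_univ, true_and, Perm.mem_support_cycleOf_iff, hv,
    and_true]
  constructor
  · rintro ⟨n, rfl⟩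
    rw [← Perm.coe_pow]
    exact Perm.sameCycle_pow_right.mpr (Perm.SameCycle.refl e v)
  · intro h
    obtain ⟨n, -, rfl⟩ := h.exists_pow_eq'
    exact ⟨n, by rw [Perm.coe_pow]⟩

theorem card_filter_even_orbitsOf (e : Perm α) :
    #{O ∈ orbitsOf e | Even #O} = #{g ∈ e.cycleFactorsFinset | Even #g.support} := by
  symm
  refine card_bij (fun g _ => g.support) ?_ ?_ ?_
  · intro g hg
    rw [mem_filter] at hg ⊢
    obtain ⟨x, hx⟩ := (Perm.mem_cycleFactorsFinset_iff.mp hg.1).1.nonempty_support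
    refine ⟨mem_image.mpr ⟨x, mem_univ x, ?_⟩, hg.2⟩
    rw [orbitOf_eq_support_cycleOf (Perm.mem_cycleFactorsFinset_support_le hg.1 hx),
      ← Perm.cycle_is_cycleOf hx hg.1]
  · intro g hg g' hg' h
    have hg := (mem_filter.mp hg).1
    obtain ⟨x, hx⟩ := (Perm.mem_cycleFactorsFinset_iff.mp hg).1.nonempty_support
    rw [Perm.cycle_is_cycleOf hx hg, Perm.cycle_is_cycleOf (h ▸ hx) (mem_filter.mp hg').1]
  · intro O hO
    obtain ⟨hO, heven⟩ := mem_filter.mp hO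
    obtain ⟨v, -, rfl⟩ := mem_image.mp hO
    have hv : v ∈ e.support := by
      refine Perm.mem_support.mpr fun hfix => ?_
      rw [orbitOf_eq_singleton_s9 hfix, card_singleton] at heven
      exact Nat.not_even_one heven
    rw [orbitOf_eq_support_cycleOf hv] at heven ⊢
    exact ⟨e.cycleOf v,
      mem_filter.mpr ⟨Perm.cycleOf_mem_cycleFactorsFinset_iff.mpr hv, heven⟩, rfl⟩

theorem sign_eq_neg_one_pow_card_even_orbitsOf_s9 (e : Perm α) :
    Perm.sign e = (-1) ^ #{O ∈ orbitsOf e | Even #O} := by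
  rw [card_filter_even_orbitsOf, ← prod_const, prod_filter, Perm.sign_of_cycleType',
    Perm.cycleType_def, Multiset.map_map, prod_map_val]
  refine prod_congr rfl fun g _ => ?_
  rcases Nat.even_or_odd #g.support with h | h
  · simp [h.neg_one_pow, h]
  · simp [h.neg_one_pow, Nat.not_even_iff_odd.mpr h]

end Orbits

section Components

variable {V E I : Type*} [Fintype V] (G : OHG V E I) {U : Finset V}
  (c : {v : V // v ∉ U} → I × I)

theorem mem_compOf {v w : V} : w ∈ compOf G U c v ↔ Relation.EqvGen (arcRel G U c) v w := by
  simp [compOf]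

theorem compOf_eq_of_mem {v w : V} (h : w ∈ compOf G U c v) :
    compOf G U c w = compOf G U c v := by
  have hequiv := Relation.EqvGen.is_equivalence (arcRel G U c)
  rw [mem_compOf] at h
  ext x
  simp only [mem_compOf]
  exact ⟨hequiv.trans h, hequiv.trans (hequiv.symm h)⟩

theorem compOf_eq_singleton_of_backstep (ht : ∀ v, G.vtx (c v).1 = v.1)
    (hinj : Function.Injective fun v => G.vtx (c v).2) {v : {v : V // v ∉ U}}
    (hbs : (c v).1 = (c v).2) : compOf G U c v = {v.1} := by
  have hloop : G.vtx (c v).2 = v := hbs ▸ ht v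
  -- injectivity of heads: the loop at `v` is the only arc entering `v`
  have harc : ∀ a b, arcRel G U c a b → (a = v ↔ b = v) := by
    rintro _ _ ⟨x, rfl, rfl⟩
    constructor
    · intro hx
      rw [Subtype.ext hx, hloop]
    · intro hx
      rw [hinj (hx.trans hloop.symm)]
  have hclosed : Equivalence fun a b : V => (a = v ↔ b = v) :=
    ⟨fun _ => Iff.rfl, Iff.symm, Iff.trans⟩
  ext w
  rw [mem_compOf, mem_singleton]
  constructor
  · intro h
    exact (hclosed.eqvGen_iff.mp (h.mono harc)).mp rfl
  · rintro rfl
    exact Relation.EqvGen.refl _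

variable [DecidableEq V]

theorem compOf_mem_compsOf (v : V) : compOf G U c v ∈ compsOf G U c :=
  mem_image_of_mem _ (mem_univ v)

theorem mem_iff_compOf_eq {O : Finset V} (hO : O ∈ compsOf G U c) {v : V} :
    v ∈ O ↔ compOf G U c v = O := by
  obtain ⟨w, -, rfl⟩ := mem_image.mp hO
  exact ⟨compOf_eq_of_mem G c, fun h => h ▸ (mem_compOf G c).mpr (Relation.EqvGen.refl v)⟩

def adjSign (v : {v : V // v ∉ U}) : ℤˣ :=
  -(G.sgn (c v).1 * G.sgn (c v).2)

def IsBackstepComp (O : Finset V) : Prop :=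
  ∃ v : {v : V // v ∉ U}, O = {v.1} ∧ (c v).1 = (c v).2

theorem prod_adjSign_eq_prod_compsOf :
    ∏ v, adjSign G c v = ∏ O ∈ compsOf G U c, ∏ v with v.1 ∈ O, adjSign G c v := by
  rw [← prod_fiberwise_of_maps_to fun v _ => compOf_mem_compsOf G c v.1]
  refine prod_congr rfl fun O hO => prod_congr (filter_congr fun v _ => ?_) fun _ _ => rfl
  exact (mem_iff_compOf_eq G c hO).symm

/-- A backstep component `{v}` has sign product `-σ(t_v)² = -1`. -/
theorem prod_adjSign_comp (O : Finset V) :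
    ∏ v with v.1 ∈ O, adjSign G c v
      = (if NegComp G U c O then -1 else 1) * (if IsBackstepComp c O then -1 else 1) := by
  by_cases hbs : IsBackstepComp c O
  · obtain ⟨v, rfl, hv⟩ := hbs
    have hfilter : ({w | w.1 ∈ ({v.1} : Finset V)} : Finset {v : V // v ∉ U}) = {v} := by
      ext w
      simp [Subtype.ext_iff]
    have hneg : ¬ NegComp G U c {v.1} := fun h => h.1 ⟨v, rfl, hv⟩
    rw [hfilter, prod_singleton, adjSign, if_neg hneg, if_pos ⟨v, rfl, hv⟩, ← hv,
      Int.units_mul_self, one_mul]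
  · rw [if_neg hbs, mul_one]
    split_ifs with hneg
    · exact hneg.2
    · exact (Int.units_eq_one_or _).resolve_right fun h => hneg ⟨hbs, h⟩

end Components

section Contributors

variable {V E I : Type*} (G : OHG V E I) {U : Finset V} {φ : {v : V // v ∈ U} ↪ V}
  {c : {v : V // v ∉ U} → I × I}

theorem IsRedCont.injective_heads (hc : IsRedCont G U φ c) :
    Function.Injective fun v => G.vtx (c v).2 :=
  Set.injOn_univ.mp hc.2.2.injOn

variable [DecidableEq V]

theorem compFun_coe (x : {v : V // v ∉ U}) : compFun G U φ c x = G.vtx (c x).2 :=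
  dif_neg x.2

variable [Fintype V]

theorem IsRedCont.bijective_compFun (hc : IsRedCont G U φ c) :
    Function.Bijective (compFun G U φ c) := by
  have hheads : ∀ v, G.vtx (c v).2 ∉ Set.range φ := fun v => hc.2.2.mapsTo (Set.mem_univ v)
  refine Finite.injective_iff_bijective.mp fun x y hxy => ?_
  by_cases hx : x ∈ U <;> by_cases hy : y ∈ U <;>
    simp only [compFun, dif_pos, dif_neg, hx, hy, not_false_eq_true] at hxy
  · exact congrArg Subtype.val (φ.injective hxy)
  · exact absurd ⟨_, hxy⟩ (hheads ⟨y, hy⟩)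
  · exact absurd ⟨_, hxy.symm⟩ (hheads ⟨x, hx⟩)
  · exact congrArg Subtype.val (hc.injective_heads G hxy)

def completion (hc : IsRedCont G U φ c) : Perm V :=
  Equiv.ofBijective _ (hc.bijective_compFun G)

variable [DecidableEq I]

theorem card_backstepComps (ht : ∀ v, G.vtx (c v).1 = v.1)
    (hinj : Function.Injective fun v => G.vtx (c v).2) :
    #{O ∈ compsOf G U c | IsBackstepComp c O} = bsR U c := by
  symm
  refine card_bij (fun v _ => {v.1}) (fun v hv => ?_) (fun v _ w _ h => ?_) fun O hO => ?_
  · have hbs := (mem_filter.mp hv).2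
    rw [mem_filter, ← compOf_eq_singleton_of_backstep G c ht hinj hbs]
    exact ⟨compOf_mem_compsOf G c v, v, compOf_eq_singleton_of_backstep G c ht hinj hbs, hbs⟩
  · exact Subtype.ext (singleton_injective h)
  · obtain ⟨v, rfl, hbs⟩ := (mem_filter.mp hO).2
    exact ⟨v, mem_filter.mpr ⟨mem_univ v, hbs⟩, rfl⟩

theorem neg_one_pow_ncR_add_bsR (ht : ∀ v, G.vtx (c v).1 = v.1)
    (hinj : Function.Injective fun v => G.vtx (c v).2) :
    (-1 : ℤˣ) ^ (ncR G U c + bsR U c) = ∏ v, adjSign G c v := by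
  rw [prod_adjSign_eq_prod_compsOf, prod_congr rfl fun O _ => prod_adjSign_comp G c O,
    prod_mul_distrib, ← prod_filter, ← prod_filter, prod_const, prod_const,
    card_backstepComps G ht hinj, ncR, pow_add]

theorem csgnR_eq_sign_mul_prod_adjSign (hc : IsRedCont G U φ c) :
    csgnR G U φ c = ((Perm.sign (completion G hc) * ∏ v, adjSign G c v : ℤˣ) : ℤ) := by
  rw [← neg_one_pow_ncR_add_bsR G hc.1 (hc.injective_heads G),
    sign_eq_neg_one_pow_card_even_orbitsOf_s9, ← pow_add, ← add_assoc, csgnR]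
  push_cast
  rfl

end Contributors

section HeadSwap

variable {V E I : Type*} [DecidableEq V] (G : OHG V E I) {U : Finset V}
  {φ : {v : V // v ∈ U} ↪ V} {c : {v : V // v ∉ U} → I × I} {p q : {v : V // v ∉ U}}

def swapHeads (c : {v : V // v ∉ U} → I × I) (p q : {v : V // v ∉ U}) :
    {v : V // v ∉ U} → I × I :=
  fun v => ((c v).1, (c (swap p q v)).2)

theorem swapHeads_swapHeads : swapHeads (swapHeads c p q) p q = c := by
  funext v
  simp [swapHeads]

theorem swapHeads_ne (hc : IsRedCont G U φ c) (hpq : p ≠ q) : swapHeads c p q ≠ c := by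
  intro h
  have hp := congrArg (fun c' => G.vtx (c' p).2) h
  simp only [swapHeads, swap_apply_left] at hp
  exact hpq (hc.injective_heads G hp).symm

theorem isRedCont_swapHeads (hc : IsRedCont G U φ c) (hpq : G.edg (c p).1 = G.edg (c q).1) :
    IsRedCont G U φ (swapHeads c p q) := by
  refine ⟨hc.1, fun v => ?_, hc.2.2.comp (swap p q).bijective.bijOn_univ⟩
  rw [swapHeads, ← hc.2.1, apply_swap_eq_self (v := fun v => G.edg (c v).1) hpq]

theorem compFun_swapHeads :
    compFun G U φ (swapHeads c p q) = compFun G U φ c ∘ swap p.1 q.1 := by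
  funext v
  by_cases hv : v ∈ U
  · have hfix : swap p.1 q.1 v = v :=
      swap_apply_of_ne_of_ne (fun h => p.2 (h ▸ hv)) (fun h => q.2 (h ▸ hv))
    simp [compFun, hv, hfix]
  · lift v to {v : V // v ∉ U} using hv
    rw [Function.comp_apply, ← Perm.ofSubtype_swap_eq, Perm.ofSubtype_apply_coe, compFun_coe,
      compFun_coe]
    rfl

/-- The pair of distinct vertices whose heads are swapped is chosen from the tail edges alone,
which `swapHeads` does not change; this makes `flipHeads` an involution. -/
def flipHeads (c : {v : V // v ∉ U} → I × I) (h : ¬ EdgeMonicR G U c) :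
    {v : V // v ∉ U} → I × I :=
  swapHeads c (Function.not_injective_iff.mp h).choose
    (Function.not_injective_iff.mp h).choose_spec.choose

theorem flipHeads_flipHeads (h : ¬ EdgeMonicR G U c)
    (h' : ¬ EdgeMonicR G U (flipHeads G c h)) : flipHeads G (flipHeads G c h) h' = c :=
  swapHeads_swapHeads

theorem exists_flipHeads_eq_swapHeads (h : ¬ EdgeMonicR G U c) :
    ∃ p q, G.edg (c p).1 = G.edg (c q).1 ∧ p ≠ q ∧ flipHeads G c h = swapHeads c p q :=
  ⟨_, _, (Function.not_injective_iff.mp h).choose_spec.choose_spec.1,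
    (Function.not_injective_iff.mp h).choose_spec.choose_spec.2, rfl⟩

variable [Fintype V]

theorem prod_adjSign_swapHeads :
    ∏ v, adjSign G (swapHeads c p q) v = ∏ v, adjSign G c v := by
  have hsplit : ∀ c' : {v : V // v ∉ U} → I × I,
      ∏ v, adjSign G c' v = (∏ v, -G.sgn (c' v).1) * ∏ v, G.sgn (c' v).2 := fun c' => by
    simp only [adjSign, ← neg_mul, prod_mul_distrib]
  rw [hsplit, hsplit]
  congr 1
  exact Equiv.prod_comp (swap p q) fun v => G.sgn (c v).2

theorem completion_swapHeads (hc : IsRedCont G U φ c) (hpq : G.edg (c p).1 = G.edg (c q).1) :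
    completion G (isRedCont_swapHeads G hc hpq) = completion G hc * swap p.1 q.1 :=
  Equiv.ext fun v => congrFun (compFun_swapHeads G) v

theorem csgnR_swapHeads [DecidableEq I] (hc : IsRedCont G U φ c)
    (hedg : G.edg (c p).1 = G.edg (c q).1) (hpq : p ≠ q) :
    csgnR G U φ (swapHeads c p q) = -csgnR G U φ c := by
  rw [csgnR_eq_sign_mul_prod_adjSign G (isRedCont_swapHeads G hc hedg),
    csgnR_eq_sign_mul_prod_adjSign G hc, completion_swapHeads G hc hedg, prod_adjSign_swapHeads,
    map_mul, Perm.sign_swap (Subtype.coe_ne_coe.mpr hpq)]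
  push_cast
  ring

end HeadSwap

/-- For any injection `φ` from `U ⊆ V` into `V` (with image `W`), the
signed sum of `csgn` over all nonzero reduced `[u,w]`-contributors equals the signed
sum over only the edge-monic ones; equivalently the sum over the non-edge-monic
nonzero reduced `[u,w]`-contributors is `0`. -/
theorem sum_csgnR_eq_sum_edgeMonic (G : OHG V E I) (U : Finset V)
    (φ : {v : V // v ∈ U} ↪ V) :
    (∑ c ∈ Finset.univ.filter (fun c : {v : V // v ∉ U} → I × I => IsRedCont G U φ c),
        csgnR G U φ c
      = ∑ c ∈ Finset.univ.filter
          (fun c : {v : V // v ∉ U} → I × I => IsRedCont G U φ c ∧ EdgeMonicR G U c),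
          csgnR G U φ c) ∧
    (∑ c ∈ Finset.univ.filter
        (fun c : {v : V // v ∉ U} → I × I => IsRedCont G U φ c ∧ ¬ EdgeMonicR G U c),
        csgnR G U φ c = 0) := by
  have hzero : ∑ c ∈ univ.filter (fun c => IsRedCont G U φ c ∧ ¬ EdgeMonicR G U c),
      csgnR G U φ c = 0 := by
    refine sum_involution (fun c hc => flipHeads G c (mem_filter.mp hc).2.2)
      (fun c hc => ?_) (fun c hc _ => ?_) (fun c hc => ?_) fun c hc => flipHeads_flipHeads G _ _
    all_goals
      obtain ⟨-, hred, hmonic⟩ := mem_filter.mp hc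
      obtain ⟨p, q, hedg, hpq, hflip⟩ := exists_flipHeads_eq_swapHeads G hmonic
      rw [hflip]
    · rw [csgnR_swapHeads G hred hedg hpq, add_neg_cancel]
    · exact swapHeads_ne G hred hpq
    · exact mem_filter.mpr ⟨mem_univ _, isRedCont_swapHeads G hred hedg, hmonic⟩
  refine ⟨?_, hzero⟩
  rw [← sum_filter_add_sum_filter_not _ (EdgeMonicR G U), filter_filter, filter_filter, hzero,
    add_zero]
end
end
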